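/- arXiv:2405.13765 — 2 statements merged into one kernel-verified Lean document; each statement's English description precedes it below -/
import Mathlib

section
/- Under the assumptions of the previous high-order tuner statement (convex Lₜ-smooth fₜ with common minimizer x*, Nₜ ≥ Lₜ, βₜ ∈ [0,1), μₜ ∈ [ε,1] for fixed ε > 0, γₜ = μₜ/2), and additionally assuming the sequence Nₜ is bounded by N̄ < ∞, the partial sums aₜ = Σ_{s=0}^{t} (f_s(x_s) - f_s(x*)) satisfy aₜ ≤ (N̄/ε) V₀ for all t, where V₀ = ‖z₀ - x*‖² + ‖y₀ - z₀‖². Consequently fₜ(xₜ) - fₜ(x*) → 0 as t → ∞. -/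
/-!
The tuner is analysed through the Lyapunov function `V t = ‖z t - x⋆‖² + ‖y t - z t‖²`.
For a convex function whose gradient is `N`-Lipschitz, co-coercivity at the minimiser,
`f x - f x⋆ + ‖∇f x‖² / (2N) ≤ ⟪∇f x, x - x⋆⟫`, absorbs the quadratic terms produced by the two
gradient steps, so `V (t+1) + (μ t / N t) (f t (x t) - f t x⋆) ≤ V t`. Telescoping bounds the
weighted gaps by `V 0`; the weights are at least `ε / N̄`, and a nonnegative series with bounded
partial sums has terms tending to zero.
-/

open scoped RealInnerProductSpace
open Filter Set

section Smooth

variable {E : Type*} [NormedAddCommGroup E] [InnerProductSpace ℝ E] [CompleteSpace E]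
  {f : E → ℝ} {g : E → E} {g' : E} {L : ℝ}

theorem HasGradientAt.hasDerivAt_comp_add_smul {a u : E} {t : ℝ}
    (h : HasGradientAt f g' (a + t • u)) :
    HasDerivAt (fun s : ℝ => f (a + s • u)) ⟪g', u⟫ t := by
  have hline : HasDerivAt (fun s : ℝ => a + s • u) u t := by
    simpa using ((hasDerivAt_id t).smul_const u).const_add a
  exact h.hasFDerivAt.comp_hasDerivAt t hline

theorem ConvexOn.add_inner_le (hf : ConvexOn ℝ univ f) {a : E} (ha : HasGradientAt f g' a)
    (b : E) : f a + ⟪g', b - a⟫ ≤ f b := by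
  have hline : ConvexOn ℝ univ (fun s : ℝ => f (a + s • (b - a))) := by
    simpa [Function.comp_def, AffineMap.lineMap_apply, add_comm]
      using hf.comp_affineMap (AffineMap.lineMap a b)
  have hderiv := (show HasGradientAt f g' (a + (0 : ℝ) • (b - a)) by simpa using ha)
    |>.hasDerivAt_comp_add_smul
  have := hline.le_slope_of_hasDerivAt (mem_univ 0) (mem_univ 1) one_pos hderiv
  simp only [slope_def_field, zero_smul, add_zero, one_smul, add_sub_cancel] at this
  linarith

theorem le_add_inner_add_sq_of_lipschitz_gradient (hg : ∀ w, HasGradientAt f (g w) w)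
    (hlip : ∀ w v, ‖g w - g v‖ ≤ L * ‖w - v‖) (a b : E) :
    f b ≤ f a + ⟪g a, b - a⟫ + L / 2 * ‖b - a‖ ^ 2 := by
  set u := b - a
  set ψ : ℝ → ℝ := fun s => f (a + s • u) - ⟪g a, u⟫ * s - L / 2 * ‖u‖ ^ 2 * s ^ 2
  have hψ : ∀ s, HasDerivAt ψ (⟪g (a + s • u), u⟫ - ⟪g a, u⟫ - L * s * ‖u‖ ^ 2) s := fun s =>
    (((hg _).hasDerivAt_comp_add_smul.sub ((hasDerivAt_id s).const_mul _)).sub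
      ((hasDerivAt_pow 2 s).const_mul _)).congr_deriv (by norm_num; ring)
  have hψ_nonpos : ∀ s ∈ interior (Icc (0 : ℝ) 1),
      ⟪g (a + s • u), u⟫ - ⟪g a, u⟫ - L * s * ‖u‖ ^ 2 ≤ 0 := by
    intro s hs
    rw [interior_Icc] at hs
    have hlip_s : ‖g (a + s • u) - g a‖ ≤ L * (s * ‖u‖) := by
      simpa [norm_smul, abs_of_pos hs.1] using hlip (a + s • u) a
    have := (real_inner_le_norm (g (a + s • u) - g a) u).trans
      (mul_le_mul_of_nonneg_right hlip_s (norm_nonneg u))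
    rw [inner_sub_left] at this
    linarith
  have hanti : AntitoneOn ψ (Icc 0 1) :=
    antitoneOn_of_hasDerivWithinAt_nonpos (convex_Icc 0 1)
      (fun s _ => (hψ s).continuousAt.continuousWithinAt) (fun s _ => (hψ s).hasDerivWithinAt)
      hψ_nonpos
  have := hanti (left_mem_Icc.2 zero_le_one) (right_mem_Icc.2 zero_le_one) zero_le_one
  simp only [ψ, u, zero_smul, add_zero, one_smul, add_sub_cancel] at this
  linarith

theorem ConvexOn.add_inner_add_sq_div_le_of_lipschitz_gradient (hf : ConvexOn ℝ univ f)
    (hg : ∀ w, HasGradientAt f (g w) w) (hlip : ∀ w v, ‖g w - g v‖ ≤ L * ‖w - v‖) (hL : 0 < L)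
    (a b : E) : f a + ⟪g a, b - a⟫ + ‖g b - g a‖ ^ 2 / (2 * L) ≤ f b := by
  -- convexity at `a` and the descent lemma from `b`, both evaluated at the gradient step
  -- `w = b - L⁻¹ (g b - g a)`
  set d := g b - g a
  set w := b - L⁻¹ • d
  have hconv := hf.add_inner_le (hg a) w
  have hdesc := le_add_inner_add_sq_of_lipschitz_gradient hg hlip b w
  have hwb : w - b = -(L⁻¹ • d) := by simp [w]
  have hwa : w - a = (b - a) - L⁻¹ • d := by simp only [w]; abel
  rw [hwa, inner_sub_right, real_inner_smul_right] at hconv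
  rw [hwb, inner_neg_right, real_inner_smul_right, norm_neg, norm_smul, Real.norm_eq_abs,
    abs_inv, abs_of_pos hL] at hdesc
  have hd : ‖d‖ ^ 2 = ⟪g b, d⟫ - ⟪g a, d⟫ := by
    rw [← inner_sub_left, real_inner_self_eq_norm_sq]
  have key : ‖d‖ ^ 2 / (2 * L) = L⁻¹ * (⟪g b, d⟫ - ⟪g a, d⟫) - L / 2 * (L⁻¹ * ‖d‖) ^ 2 := by
    rw [← hd]; field_simp; ring
  linarith

theorem gradient_eq_zero_of_forall_le {xstar : E} (h : HasGradientAt f g' xstar)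
    (hmin : ∀ w, f xstar ≤ f w) : g' = 0 := by
  have := ((isMinOn_univ_iff.2 hmin).isLocalMin univ_mem).hasFDerivAt_eq_zero h.hasFDerivAt
  exact (InnerProductSpace.toDual ℝ E).injective (by rw [this, map_zero])

end Smooth

section Tuner

variable {E : Type*} [NormedAddCommGroup E] [InnerProductSpace ℝ E]

def tunerLyapunov (xstar y z : E) : ℝ := ‖z - xstar‖ ^ 2 + ‖y - z‖ ^ 2

theorem tunerLyapunov_step {xstar y z g : E} {β c κ D : ℝ} (hβ : β ∈ Icc (0 : ℝ) 1)
    (hc : 0 ≤ c) (hcκ : c ≤ κ)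
    (hgap : D + κ / 2 * ‖g‖ ^ 2 ≤ ⟪g, β • z + (1 - β) • y - xstar⟫) :
    tunerLyapunov xstar (β • z + (1 - β) • y - c • g) (z - (c / 2) • g) + c * D
      ≤ tunerLyapunov xstar y z := by
  set A := z - xstar
  set B := y - z
  have hz : z - (c / 2) • g - xstar = A - (c / 2) • g := by simp only [A]; abel
  have hy : β • z + (1 - β) • y - c • g - (z - (c / 2) • g) = (1 - β) • B - (c / 2) • g := by
    simp only [B]; module
  have hx : β • z + (1 - β) • y - xstar = A + (1 - β) • B := by simp only [A, B]; module
  rw [hx, inner_add_right, real_inner_smul_right] at hgap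
  have hz_sq : ‖A - (c / 2) • g‖ ^ 2 = ‖A‖ ^ 2 - c * ⟪g, A⟫ + (c / 2) ^ 2 * ‖g‖ ^ 2 := by
    rw [norm_sub_sq_real, norm_smul, real_inner_smul_right, real_inner_comm, Real.norm_eq_abs,
      mul_pow, sq_abs]
    ring
  have hy_sq : ‖(1 - β) • B - (c / 2) • g‖ ^ 2
      = (1 - β) ^ 2 * ‖B‖ ^ 2 - c * ((1 - β) * ⟪g, B⟫) + (c / 2) ^ 2 * ‖g‖ ^ 2 := by
    rw [norm_sub_sq_real, norm_smul, norm_smul, real_inner_smul_left, real_inner_smul_right,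
      real_inner_comm, Real.norm_eq_abs, Real.norm_eq_abs, mul_pow, mul_pow, sq_abs, sq_abs]
    ring
  have hβ_sq : (1 - β) ^ 2 ≤ 1 := by nlinarith [hβ.1, hβ.2]
  rw [tunerLyapunov, tunerLyapunov, hz, hy, hz_sq, hy_sq]
  nlinarith [mul_le_mul_of_nonneg_left hgap hc, mul_le_mul_of_nonneg_right hcκ hc,
    mul_le_mul_of_nonneg_right hβ_sq (sq_nonneg ‖B‖), sq_nonneg ‖g‖]

theorem tunerLyapunov_gradient_step [CompleteSpace E] {f : E → ℝ} {g : E → E} {xstar x y z : E}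
    {β μ N : ℝ} (hf : ConvexOn ℝ univ f) (hg : ∀ w, HasGradientAt f (g w) w)
    (hlip : ∀ w v, ‖g w - g v‖ ≤ N * ‖w - v‖) (hN : 0 < N) (hmin : ∀ w, f xstar ≤ f w)
    (hβ : β ∈ Icc (0 : ℝ) 1) (hμ : μ ∈ Icc (0 : ℝ) 1) (hx : x = β • z + (1 - β) • y) :
    tunerLyapunov xstar (x - (μ / N) • g x) (z - (μ / 2 / N) • g x) + μ / N * (f x - f xstar)
      ≤ tunerLyapunov xstar y z := by
  have hcocoercive := hf.add_inner_add_sq_div_le_of_lipschitz_gradient hg hlip hN x xstar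
  rw [gradient_eq_zero_of_forall_le (hg xstar) hmin, zero_sub, norm_neg,
    inner_sub_right] at hcocoercive
  rw [div_right_comm, hx]
  refine tunerLyapunov_step hβ (div_nonneg hμ.1 hN.le) (div_le_div_of_nonneg_right hμ.2 hN.le) ?_
  rw [← hx, inner_sub_right]
  have : ‖g x‖ ^ 2 / (2 * N) = 1 / N / 2 * ‖g x‖ ^ 2 := by ring
  linarith

end Tuner

theorem sum_range_le_of_add_le {V w : ℕ → ℝ} (hV : ∀ t, V (t + 1) + w t ≤ V t)
    (hV_nonneg : ∀ t, 0 ≤ V t) (n : ℕ) : ∑ s ∈ Finset.range n, w s ≤ V 0 := by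
  calc ∑ s ∈ Finset.range n, w s ≤ ∑ s ∈ Finset.range n, (V s - V (s + 1)) :=
        Finset.sum_le_sum fun s _ => by linarith [hV s]
    _ = V 0 - V n := Finset.sum_range_sub' V n
    _ ≤ V 0 := sub_le_self _ (hV_nonneg n)

theorem stmt_7 (N : ℕ)
    (f : ℕ → EuclideanSpace ℝ (Fin N) → ℝ)
    (f' : ℕ → EuclideanSpace ℝ (Fin N) → EuclideanSpace ℝ (Fin N))
    (x y z : ℕ → EuclideanSpace ℝ (Fin N))
    (xstar : EuclideanSpace ℝ (Fin N))
    (L Nt β μ γ : ℕ → ℝ) (ε Nbar : ℝ) (hε : 0 < ε)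
    (hgrad : ∀ t w, HasGradientAt (f t) (f' t w) w)
    (hconv : ∀ t, ConvexOn ℝ Set.univ (f t))
    (hsmooth : ∀ t w v, ‖f' t w - f' t v‖ ≤ L t * ‖w - v‖)
    (hmin : ∀ t w, f t xstar ≤ f t w)
    (hL : ∀ t, 0 < L t) (hN : ∀ t, L t ≤ Nt t)
    (hNbar : ∀ t, Nt t ≤ Nbar)
    (hβ : ∀ t, β t ∈ Set.Ico (0 : ℝ) 1)
    (hμ : ∀ t, μ t ∈ Set.Icc ε 1)
    (hγ : ∀ t, γ t = μ t / 2)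
    (hx : ∀ t, x t = β t • z t + (1 - β t) • y t)
    (hy : ∀ t, y (t + 1) = x t - (μ t / Nt t) • f' t (x t))
    (hz : ∀ t, z (t + 1) = z t - (γ t / Nt t) • f' t (x t)) :
    (∀ t, ∑ s ∈ Finset.range (t + 1), (f s (x s) - f s xstar)
        ≤ (Nbar / ε) * (‖z 0 - xstar‖ ^ 2 + ‖y 0 - z 0‖ ^ 2)) ∧
      Tendsto (fun t => f t (x t) - f t xstar) atTop (nhds 0) := by
  have hNt : ∀ t, 0 < Nt t := fun t => (hL t).trans_le (hN t)
  have hgap : ∀ t, 0 ≤ f t (x t) - f t xstar := fun t => sub_nonneg.2 (hmin t _)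
  have hlip : ∀ t w v, ‖f' t w - f' t v‖ ≤ Nt t * ‖w - v‖ := fun t w v =>
    (hsmooth t w v).trans (mul_le_mul_of_nonneg_right (hN t) (norm_nonneg _))
  have hstep : ∀ t, tunerLyapunov xstar (y (t + 1)) (z (t + 1))
      + μ t / Nt t * (f t (x t) - f t xstar) ≤ tunerLyapunov xstar (y t) (z t) := fun t => by
    rw [hy, hz, hγ]
    exact tunerLyapunov_gradient_step (hconv t) (hgrad t) (hlip t) (hNt t) (hmin t)
      (Ico_subset_Icc_self (hβ t)) ⟨hε.le.trans (hμ t).1, (hμ t).2⟩ (hx t)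
  have hweight : ∀ t, f t (x t) - f t xstar
      ≤ Nbar / ε * (μ t / Nt t * (f t (x t) - f t xstar)) := by
    intro t
    rw [← mul_assoc]
    refine le_mul_of_one_le_left (hgap t) ?_
    rw [div_mul_div_comm, one_le_div (mul_pos hε (hNt t)), mul_comm Nbar]
    exact mul_le_mul (hμ t).1 (hNbar t) (hNt t).le (hε.le.trans (hμ t).1)
  have hsum : ∀ n, ∑ s ∈ Finset.range n, (f s (x s) - f s xstar)
      ≤ Nbar / ε * tunerLyapunov xstar (y 0) (z 0) := fun n => calc
    _ ≤ ∑ s ∈ Finset.range n, Nbar / ε * (μ s / Nt s * (f s (x s) - f s xstar)) :=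
        Finset.sum_le_sum fun s _ => hweight s
    _ ≤ _ := by
        rw [← Finset.mul_sum]
        exact mul_le_mul_of_nonneg_left (sum_range_le_of_add_le
          (V := fun t => tunerLyapunov xstar (y t) (z t)) hstep
          (fun t => add_nonneg (sq_nonneg _) (sq_nonneg _)) n)
          (div_nonneg ((hNt 0).le.trans (hNbar 0)) hε.le)
  exact ⟨fun t => hsum (t + 1), (summable_of_sum_range_le hgap hsum).tendsto_atTop_zero⟩
end

section
/- Consider the high-order tuner on ℝ^N with time-varying hyper-parameters: xₜ = βₜ zₜ + (1-βₜ) yₜ, yₜ₊₁ = xₜ - (μₜ/Nₜ)∇fₜ(xₜ), zₜ₊₁ = zₜ - (γₜ/Nₜ)∇fₜ(xₜ), where fₜ is convex Lₜ-smooth with common minimizer x* and Nₜ ≥ Lₜ > 0. Suppose there are sequences λₜ ∈ [0, 1-ε] and ξₜ ∈ [ε, ∞), ε > 0, such that c₅ := γₜ² + ξₜ₊₁(γₜ-μₜ)² - (1+λₜ)γₜ < 0, c₆ := 2[ξₜ₊₁(γₜ-μₜ) + γₜ], c₇ := ξₜ₊₁ - ξₜ(1-βₜ)⁻², and c₇ -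 c₆²/(4c₅) ≤ 0. Then Wₜ = ‖zₜ - x*‖² + ξₜ‖yₜ - zₜ‖² satisfies Wₜ₊₁ - Wₜ ≤ 2((1-λₜ)γₜ/Nₜ)(fₜ(x*) - fₜ(xₜ)) ≤ 0. -/
/-!
For a convex `f` with `L`-Lipschitz gradient `g` and minimiser `x⋆` (so `g x⋆ = 0`), the
descent lemma and cocoercivity give
`⟪g x, x⋆ - x⟫ ≤ (1 - λ) (f x⋆ - f x) - (1 + λ) / (2 N) ‖g x‖²` for `0 ≤ λ`, `L ≤ N`.
With `a = g x / N` and `b = x - z`, so that `y - z = (1 - β)⁻¹ b`, one step of the tuner changes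
`W` by exactly `2 γ ⟪a, x⋆ - x⟫ + (γ² + ξ' (γ - μ)²) ‖a‖² + c₆ ⟪a, b⟫ + c₇ ‖b‖²`. The gradient
inequality turns this into `2 (1 - λ) γ / N · (f x⋆ - f x) + c₅ ‖a‖² + c₆ ⟪a, b⟫ + c₇ ‖b‖²`, and
the quadratic form is nonpositive by completing the square, as `c₅ < 0` and
`c₇ - c₆² / (4 c₅) ≤ 0`.
-/

open scoped RealInnerProductSpace

open Set AffineMap

section Smooth

variable {E : Type*} [NormedAddCommGroup E] [InnerProductSpace ℝ E] [CompleteSpace E]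
  {f : E → ℝ} {g : E → E} {L : ℝ}

theorem HasGradientAt.hasDerivAt_comp_lineMap {g₀ w v : E} {s : ℝ}
    (hg : HasGradientAt f g₀ (lineMap w v s)) :
    HasDerivAt (f ∘ lineMap w v) ⟪g₀, v - w⟫ s :=
  (hasGradientAt_iff_hasFDerivAt.mp hg).comp_hasDerivAt s hasDerivAt_lineMap

theorem IsLocalMin.hasGradientAt_eq_zero {g₀ w : E} (hmin : IsLocalMin f w)
    (hg : HasGradientAt f g₀ w) : g₀ = 0 := by
  simpa using hmin.hasFDerivAt_eq_zero (hasGradientAt_iff_hasFDerivAt.mp hg)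

theorem ConvexOn.add_inner_le_of_hasGradientAt {g₀ w : E} (hf : ConvexOn ℝ univ f)
    (hg : HasGradientAt f g₀ w) (v : E) : f w + ⟪g₀, v - w⟫ ≤ f v := by
  have hφ : ConvexOn ℝ univ (f ∘ lineMap w v) := hf.comp_affineMap (lineMap w v)
  have := hφ.le_slope_of_hasDerivAt (mem_univ 0) (mem_univ 1) zero_lt_one
    (HasGradientAt.hasDerivAt_comp_lineMap (by simpa using hg))
  simp only [slope_def_field, Function.comp_apply, lineMap_apply_one, lineMap_apply_zero,
    sub_zero, div_one] at this
  linarith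

theorem image_one_le_of_deriv_sub_le {φ φ' : ℝ → ℝ} {K : ℝ}
    (hφ : ∀ s ∈ Icc (0 : ℝ) 1, HasDerivAt φ (φ' s) s)
    (hK : ∀ s ∈ Ioo (0 : ℝ) 1, φ' s - φ' 0 ≤ K * s) :
    φ 1 ≤ φ 0 + φ' 0 + K / 2 := by
  set ψ : ℝ → ℝ := fun s ↦ φ s - φ' 0 * s - K / 2 * s ^ 2
  have hψ : ∀ s ∈ Icc (0 : ℝ) 1, HasDerivAt ψ (φ' s - φ' 0 - K * s) s := fun s hs ↦ by
    refine (((hφ s hs).sub ((hasDerivAt_id s).const_mul (φ' 0))).sub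
      ((hasDerivAt_pow 2 s).const_mul (K / 2))).congr_deriv ?_
    norm_num; ring
  have hanti : AntitoneOn ψ (Icc 0 1) := by
    refine antitoneOn_of_hasDerivWithinAt_nonpos (f' := fun s ↦ φ' s - φ' 0 - K * s)
      (convex_Icc 0 1)
      (fun s hs ↦ (hψ s hs).continuousAt.continuousWithinAt) (fun s hs ↦ ?_) (fun s hs ↦ ?_)
    · exact (hψ s (interior_subset hs)).hasDerivWithinAt
    · rw [interior_Icc] at hs
      linarith [hK s hs]
  have := hanti (left_mem_Icc.mpr zero_le_one) (right_mem_Icc.mpr zero_le_one) zero_le_one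
  simp only [ψ] at this
  linarith

theorem le_add_inner_add_of_lipschitz_gradient (hg : ∀ u, HasGradientAt f (g u) u)
    (hlip : ∀ u u', ‖g u - g u'‖ ≤ L * ‖u - u'‖) (w v : E) :
    f v ≤ f w + ⟪g w, v - w⟫ + L / 2 * ‖v - w‖ ^ 2 := by
  have key := image_one_le_of_deriv_sub_le (φ := f ∘ lineMap w v)
    (φ' := fun s ↦ ⟪g (lineMap w v s), v - w⟫) (K := L * ‖v - w‖ ^ 2)
    (fun s _ ↦ (hg _).hasDerivAt_comp_lineMap) (fun s hs ↦ ?_)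
  · simpa [mul_div_right_comm] using key
  calc ⟪g (lineMap w v s), v - w⟫ - ⟪g (lineMap w v (0 : ℝ)), v - w⟫
      = ⟪g (lineMap w v s) - g w, v - w⟫ := by simp [inner_sub_left]
    _ ≤ ‖g (lineMap w v s) - g w‖ * ‖v - w‖ := real_inner_le_norm _ _
    _ ≤ L * ‖lineMap w v s - w‖ * ‖v - w‖ := by gcongr; exact hlip _ _
    _ = L * ‖v - w‖ ^ 2 * s := by
      rw [lineMap_apply_module', add_sub_cancel_right, norm_smul, Real.norm_of_nonneg hs.1.le]
      ring

theorem le_sub_norm_sq_of_lipschitz_gradient_of_isMin (hL : 0 < L)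
    (hg : ∀ u, HasGradientAt f (g u) u) (hlip : ∀ u u', ‖g u - g u'‖ ≤ L * ‖u - u'‖)
    {w : E} (hmin : ∀ u, f w ≤ f u) (v : E) :
    f w ≤ f v - 1 / (2 * L) * ‖g v‖ ^ 2 := by
  have := le_add_inner_add_of_lipschitz_gradient hg hlip v (v - L⁻¹ • g v)
  rw [sub_sub_cancel_left, inner_neg_right, norm_neg, real_inner_smul_right,
    real_inner_self_eq_norm_sq, norm_smul, Real.norm_of_nonneg (inv_nonneg.mpr hL.le)] at this
  have hid : L⁻¹ * ‖g v‖ ^ 2 - L / 2 * (L⁻¹ * ‖g v‖) ^ 2 = 1 / (2 * L) * ‖g v‖ ^ 2 := by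
    field_simp; ring
  linarith [hmin (v - L⁻¹ • g v)]

theorem ConvexOn.add_inner_add_norm_sq_le (hL : 0 < L) (hf : ConvexOn ℝ univ f)
    (hg : ∀ u, HasGradientAt f (g u) u) (hlip : ∀ u u', ‖g u - g u'‖ ≤ L * ‖u - u'‖)
    (w v : E) : f w + ⟪g w, v - w⟫ + 1 / (2 * L) * ‖g v - g w‖ ^ 2 ≤ f v := by
  -- tilting `f` by the linear form `⟪g w, ·⟫` makes `w` a global minimiser
  set φ : E → ℝ := fun u ↦ f u - ⟪g w, u⟫
  have hφg : ∀ u, HasGradientAt φ (g u - g w) u := fun u ↦ by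
    rw [hasGradientAt_iff_hasFDerivAt, map_sub]
    exact (hg u).hasFDerivAt.sub (InnerProductSpace.toDual ℝ E (g w)).hasFDerivAt
  have hφ : ConvexOn ℝ univ φ := hf.sub ((innerₗ E (g w)).concaveOn convex_univ)
  have hmin : ∀ u, φ w ≤ φ u := fun u ↦ by
    simpa using hφ.add_inner_le_of_hasGradientAt (hφg w) u
  have := le_sub_norm_sq_of_lipschitz_gradient_of_isMin hL hφg
    (fun u u' ↦ by simpa using hlip u u') hmin v
  simp only [φ] at this
  linarith [inner_sub_right (𝕜 := ℝ) (g w) v w]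

theorem inner_gradient_sub_le_of_isMin (hL : 0 < L) (hf : ConvexOn ℝ univ f)
    (hg : ∀ u, HasGradientAt f (g u) u) (hlip : ∀ u u', ‖g u - g u'‖ ≤ L * ‖u - u'‖)
    {xstar : E} (hmin : ∀ u, f xstar ≤ f u) {lam N : ℝ} (hlam : 0 ≤ lam) (hLN : L ≤ N) (x : E) :
    ⟪g x, xstar - x⟫ ≤ (1 - lam) * (f xstar - f x) - (1 + lam) / (2 * N) * ‖g x‖ ^ 2 := by
  have hstar : g xstar = 0 :=
    IsLocalMin.hasGradientAt_eq_zero (Filter.Eventually.of_forall hmin) (hg xstar)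
  have hgap := le_sub_norm_sq_of_lipschitz_gradient_of_isMin hL hg hlip hmin x
  have hcoco := hf.add_inner_add_norm_sq_le hL hg hlip x xstar
  rw [hstar, zero_sub, norm_neg] at hcoco
  have hlam_gap : lam * (f xstar - f x) ≤ -(lam * (1 / (2 * L) * ‖g x‖ ^ 2)) := by
    nlinarith [mul_le_mul_of_nonneg_left hgap hlam]
  have hNL : (1 + lam) / (2 * N) * ‖g x‖ ^ 2 ≤ (1 + lam) * (1 / (2 * L) * ‖g x‖ ^ 2) := by
    rw [← mul_assoc, mul_one_div]
    gcongr
  linarith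

end Smooth

section Quadratic

variable {E : Type*} [NormedAddCommGroup E] [InnerProductSpace ℝ E]

theorem mul_norm_sq_add_mul_inner_add_mul_norm_sq_nonpos {c₅ c₆ c₇ : ℝ} (h₅ : c₅ < 0)
    (hdisc : c₇ - c₆ ^ 2 / (4 * c₅) ≤ 0) (a b : E) :
    c₅ * ‖a‖ ^ 2 + c₆ * ⟪a, b⟫ + c₇ * ‖b‖ ^ 2 ≤ 0 := by
  have hsq : c₅ * ‖a‖ ^ 2 + c₆ * ⟪a, b⟫ + c₇ * ‖b‖ ^ 2
      = c₅ * ‖a + (c₆ / (2 * c₅)) • b‖ ^ 2 + (c₇ - c₆ ^ 2 / (4 * c₅)) * ‖b‖ ^ 2 := by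
    have : c₅ ≠ 0 := h₅.ne
    rw [norm_add_sq_real, real_inner_smul_right, norm_smul, Real.norm_eq_abs, mul_pow, sq_abs]
    field_simp
    ring
  rw [hsq]
  have := mul_nonpos_of_nonpos_of_nonneg h₅.le (sq_nonneg ‖a + (c₆ / (2 * c₅)) • b‖)
  have := mul_nonpos_of_nonpos_of_nonneg hdisc (sq_nonneg ‖b‖)
  linarith

theorem lyapunov_step_eq {x y z xstar a : E} {β γ μ ξ ξ' : ℝ} (hβ : β ≠ 1)
    (hx : x = β • z + (1 - β) • y) :
    (‖z - γ • a - xstar‖ ^ 2 + ξ' * ‖x - μ • a - (z - γ • a)‖ ^ 2)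
        - (‖z - xstar‖ ^ 2 + ξ * ‖y - z‖ ^ 2)
      = 2 * γ * ⟪a, xstar - x⟫ + (γ ^ 2 + ξ' * (γ - μ) ^ 2) * ‖a‖ ^ 2
        + 2 * (ξ' * (γ - μ) + γ) * ⟪a, x - z⟫ + (ξ' - ξ * (1 - β)⁻¹ ^ 2) * ‖x - z‖ ^ 2 := by
  have hyz : y - z = (1 - β)⁻¹ • (x - z) := by
    rw [hx, eq_inv_smul_iff₀ (sub_ne_zero.mpr hβ.symm)]
    module
  have h₁ : z - γ • a - xstar = -((x - z) + (xstar - x) + γ • a) := by abel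
  have h₂ : x - μ • a - (z - γ • a) = (x - z) + (γ - μ) • a := by module
  have h₃ : z - xstar = -((x - z) + (xstar - x)) := by abel
  rw [h₁, h₂, h₃, hyz]
  generalize x - z = b, xstar - x = p
  simp only [norm_neg, norm_add_sq_real, inner_add_left,
    real_inner_smul_right, norm_smul, Real.norm_eq_abs, mul_pow, sq_abs, real_inner_comm a]
  ring

end Quadratic

theorem stmt_9 (N : ℕ)
    (f : ℕ → EuclideanSpace ℝ (Fin N) → ℝ)
    (f' : ℕ → EuclideanSpace ℝ (Fin N) → EuclideanSpace ℝ (Fin N))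
    (x y z : ℕ → EuclideanSpace ℝ (Fin N))
    (xstar : EuclideanSpace ℝ (Fin N))
    (L Nt β μ γ lam ξ : ℕ → ℝ) (ε : ℝ) (hε : 0 < ε)
    (hgrad : ∀ t w, HasGradientAt (f t) (f' t w) w)
    (hconv : ∀ t, ConvexOn ℝ Set.univ (f t))
    (hsmooth : ∀ t w v, ‖f' t w - f' t v‖ ≤ L t * ‖w - v‖)
    (hmin : ∀ t w, f t xstar ≤ f t w)
    (hL : ∀ t, 0 < L t) (hN : ∀ t, L t ≤ Nt t)
    (hβ : ∀ t, β t ∈ Set.Ico (0 : ℝ) 1)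
    (hlam : ∀ t, lam t ∈ Set.Icc (0 : ℝ) (1 - ε))
    (hξ : ∀ t, ξ t ∈ Set.Ici ε)
    (hc₅ : ∀ t, γ t ^ 2 + ξ (t + 1) * (γ t - μ t) ^ 2 - (1 + lam t) * γ t < 0)
    (hc₇ : ∀ t,
      (ξ (t + 1) - ξ t * (1 - β t)⁻¹ ^ 2) -
          (2 * (ξ (t + 1) * (γ t - μ t) + γ t)) ^ 2 /
            (4 * (γ t ^ 2 + ξ (t + 1) * (γ t - μ t) ^ 2 - (1 + lam t) * γ t)) ≤ 0)
    (hx : ∀ t, x t = β t • z t + (1 - β t) • y t)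
    (hy : ∀ t, y (t + 1) = x t - (μ t / Nt t) • f' t (x t))
    (hz : ∀ t, z (t + 1) = z t - (γ t / Nt t) • f' t (x t)) :
    ∀ t, (‖z (t + 1) - xstar‖ ^ 2 + ξ (t + 1) * ‖y (t + 1) - z (t + 1)‖ ^ 2)
          - (‖z t - xstar‖ ^ 2 + ξ t * ‖y t - z t‖ ^ 2)
        ≤ 2 * ((1 - lam t) * γ t / Nt t) * (f t xstar - f t (x t)) ∧
      2 * ((1 - lam t) * γ t / Nt t) * (f t xstar - f t (x t)) ≤ 0 := by
  intro t
  have hNt : 0 < Nt t := (hL t).trans_le (hN t)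
  have hlam₁ : 0 ≤ 1 - lam t := by linarith [(hlam t).2]
  have hγ : 0 ≤ γ t := by
    nlinarith [hc₅ t, (hlam t).1, mul_nonneg (hε.le.trans (hξ (t + 1))) (sq_nonneg (γ t - μ t))]
  have hcoef : 0 ≤ 2 * ((1 - lam t) * γ t / Nt t) := by positivity
  refine ⟨?_, mul_nonpos_of_nonneg_of_nonpos hcoef (by linarith [hmin t (x t)])⟩
  set a := (Nt t)⁻¹ • f' t (x t)
  have hstep : ∀ s, (s / Nt t) • f' t (x t) = s • a := fun s ↦ by rw [smul_smul, div_eq_mul_inv]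
  rw [hz t, hy t, hstep, hstep, lyapunov_step_eq (hβ t).2.ne (hx t)]
  have hgrad_step : 2 * γ t * ⟪a, xstar - x t⟫ ≤ 2 * ((1 - lam t) * γ t / Nt t)
      * (f t xstar - f t (x t)) - (1 + lam t) * γ t * ‖a‖ ^ 2 := by
    have key := inner_gradient_sub_le_of_isMin (hL t) (hconv t) (hgrad t) (hsmooth t) (hmin t)
      (hlam t).1 (hN t) (x t)
    rw [real_inner_smul_left, norm_smul, Real.norm_of_nonneg (by positivity), mul_pow]
    calc 2 * γ t * ((Nt t)⁻¹ * ⟪f' t (x t), xstar - x t⟫)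
        = 2 * γ t / Nt t * ⟪f' t (x t), xstar - x t⟫ := by ring
      _ ≤ 2 * γ t / Nt t * ((1 - lam t) * (f t xstar - f t (x t))
          - (1 + lam t) / (2 * Nt t) * ‖f' t (x t)‖ ^ 2) := by gcongr
      _ = _ := by field_simp
  linarith [mul_norm_sq_add_mul_inner_add_mul_norm_sq_nonpos (hc₅ t) (hc₇ t) a (x t - z t)]
end
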